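/- Let k ≥ 5 and λ = ⌈(k² − 7)/(2k − 7)⌉. If F is the complete graph K_k with h(v) = k−1 for every vertex, F⁻ is F with one edge removed, and F′ is any nonempty proper induced subgraph of F⁻, then ρ_h(F′) ≥ ρ_h(F⁻) + (k−3)(λ−1) − 2, where ρ_h assigns weight (k−1)λ+1 to each vertex and −2λ to each edge and sums over all vertices and edges of the graph. -/

import Mathlib

open SimpleGraph

lemma natcard_edgeSet_eq {V : Type*} [Fintype V] (G : SimpleGraph V) [DecidableRel G.Adj] :
    Nat.card G.edgeSet = G.edgeFinset.card := by
  rw [Nat.card_eq_fintype_card, ← Set.toFinset_card]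
  rfl

lemma natcard_edgeSet_le {V : Type*} [Fintype V] (G : SimpleGraph V) :
    Nat.card G.edgeSet ≤ (Fintype.card V).choose 2 := by
  classical
  rw [natcard_edgeSet_eq]
  exact SimpleGraph.card_edgeFinset_le_card_choose_two

lemma two_mul_choose_two (m : ℕ) : 2 * m.choose 2 = m * (m - 1) := by
  rw [Nat.choose_two_right, Nat.mul_div_cancel']
  rcases Nat.even_or_odd m with h | h
  · exact (h.mul_right _).two_dvd
  · cases m with
    | zero => simp
    | succ p => exact Dvd.dvd.mul_left (by simpa using (Nat.Odd.sub_odd h odd_one).two_dvd) _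

theorem stmt2 (k : ℤ) (hk : 5 ≤ k)
    (l : ℤ) (hl : l = ⌈(((k : ℚ)^2 - 7) / (2 * (k : ℚ) - 7))⌉)
    (n : ℕ) (hn : (n : ℤ) = k)
    (e : Sym2 (Fin n)) (he : ¬ e.IsDiag)
    (S : Set (Fin n)) (hS1 : S.Nonempty) (hS2 : S ≠ Set.univ) :
    (Nat.card S : ℤ) * ((k - 1) * l + 1)
      - 2 * l * (Nat.card (((⊤ : SimpleGraph (Fin n)).deleteEdges {e}).induce S).edgeSet : ℤ)
    ≥ ((k : ℤ) * ((k - 1) * l + 1)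
        - 2 * l * (Nat.card ((⊤ : SimpleGraph (Fin n)).deleteEdges {e}).edgeSet : ℤ))
      + (k - 3) * (l - 1) - 2 := by
  classical
  -- l is positive
  have hk5 : (5 : ℚ) ≤ (k : ℚ) := by exact_mod_cast hk
  have hlpos : 1 ≤ l := by
    rw [hl]
    have : (0 : ℚ) < ((k : ℚ)^2 - 7) / (2 * (k : ℚ) - 7) :=
      div_pos (by nlinarith) (by linarith)
    exact Int.ceil_pos.mpr this
  -- sizes
  set s : ℕ := Nat.card S with hs
  have hs1 : 1 ≤ s := by
    rw [hs]
    show 0 < Nat.card S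
    exact Nat.card_pos_iff.mpr ⟨Set.nonempty_coe_sort.mpr hS1, Set.Finite.to_subtype (Set.toFinite S)⟩
  have hslt : s < n := by
    rw [hs]
    have h1 := Set.ncard_lt_ncard (Set.ssubset_univ_iff.mpr hS2) (Set.toFinite (Set.univ : Set (Fin n)))
    rw [Set.ncard_univ, Nat.card_eq_fintype_card, Fintype.card_fin] at h1
    rw [Nat.card_coe_set_eq]
    exact h1
  -- induced edge count upper bound
  set a : ℕ := Nat.card (((⊤ : SimpleGraph (Fin n)).deleteEdges {e}).induce S).edgeSet with ha
  set b : ℕ := Nat.card ((⊤ : SimpleGraph (Fin n)).deleteEdges {e}).edgeSet with hb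
  have hind : 2 * a ≤ s * (s - 1) := by
    have h1 := natcard_edgeSet_le (((⊤ : SimpleGraph (Fin n)).deleteEdges {e}).induce S)
    have h2 : Fintype.card S = s := by rw [hs, Nat.card_eq_fintype_card]
    rw [h2] at h1
    calc 2 * a ≤ 2 * s.choose 2 := by omega
    _ = s * (s - 1) := two_mul_choose_two s
  -- delete edge count lower bound
  have hdel : 2 * b + 2 ≥ n * (n - 1) := by
    have hE : ((⊤ : SimpleGraph (Fin n)).deleteEdges {e}).edgeSet
        = (⊤ : SimpleGraph (Fin n)).edgeSet \ {e} := by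
      rw [SimpleGraph.edgeSet_deleteEdges]
    have htop : Nat.card (⊤ : SimpleGraph (Fin n)).edgeSet = n.choose 2 := by
      rw [natcard_edgeSet_eq, SimpleGraph.card_edgeFinset_top_eq_card_choose_two,
        Fintype.card_fin]
    have hbge : b + 1 ≥ n.choose 2 := by
      have he' : e ∈ (⊤ : SimpleGraph (Fin n)).edgeSet := by
        rw [SimpleGraph.edgeSet_top]; exact he
      have : ((⊤ : SimpleGraph (Fin n)).edgeSet \ {e}).ncard
          = (⊤ : SimpleGraph (Fin n)).edgeSet.ncard - 1 :=
        Set.ncard_diff_singleton_of_mem he'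
      rw [hb, hE, Nat.card_coe_set_eq, this, ← Nat.card_coe_set_eq, htop]
      omega
    have := two_mul_choose_two n
    omega
  -- cast to ℤ
  have hindZ : 2 * (a : ℤ) ≤ (s : ℤ) * ((s : ℤ) - 1) := by
    have : ((s * (s - 1) : ℕ) : ℤ) = (s : ℤ) * ((s : ℤ) - 1) := by
      push_cast [Nat.cast_sub hs1]; ring
    calc 2 * (a : ℤ) = ((2 * a : ℕ) : ℤ) := by push_cast; ring
    _ ≤ ((s * (s - 1) : ℕ) : ℤ) := by exact_mod_cast hind
    _ = _ := this
  have hdelZ : 2 * (b : ℤ) + 2 ≥ (n : ℤ) * ((n : ℤ) - 1) := by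
    have : ((n * (n - 1) : ℕ) : ℤ) = (n : ℤ) * ((n : ℤ) - 1) := by
      push_cast [Nat.cast_sub (by omega : 1 ≤ n)]; ring
    calc (n : ℤ) * ((n : ℤ) - 1) = ((n * (n - 1) : ℕ) : ℤ) := this.symm
    _ ≤ 2 * (b : ℤ) + 2 := by exact_mod_cast hdel
  have hsZ1 : (1 : ℤ) ≤ (s : ℤ) := by exact_mod_cast hs1
  have hsZk : (s : ℤ) ≤ k - 1 := by
    have : (s : ℤ) < (n : ℤ) := by exact_mod_cast hslt
    omega
  -- final arithmetic
  rw [← hn]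
  have key : ((s : ℤ) - 1) * ((n : ℤ) - 1 - (s : ℤ)) ≥ 0 := by
    apply mul_nonneg <;> omega
  nlinarith [mul_le_mul_of_nonneg_left hindZ (by linarith : (0:ℤ) ≤ l),
    mul_le_mul_of_nonneg_left hdelZ (by linarith : (0:ℤ) ≤ l),
    mul_nonneg (by linarith : (0:ℤ) ≤ l) key]
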